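/- arXiv:2006.05408 — 7 statements merged into one kernel-verified Lean document; each statement's English description precedes it below -/
import Mathlib

section
/- For every N ≥ 1 and every permutation σ of [N]×[N], one has Z_N(σ) ≤ N · Y_N(σ,σ). Consequently, if a sequence (σ_N)_N of permutations (σ_N of [N]×[N]) satisfies condition (C), i.e. Y_N(σ_N,σ_N)/N³ → 0, then it satisfies both condition (C1), i.e. Z_N(σ_N)/N⁴ → 0, and condition (C2), i.e. X_N(σ_N, id)/N² → 0, where id is the identity permutation of [N]×[N]. -/
open Filter Finset

/-- `X_N(σ,τ) = |{(i,j,k) : σ(i,j) ∈ {τ(i,k), τ(k,j)}}|`. -/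
def Xcnt (N : ℕ) (σ τ : Equiv.Perm (Fin N × Fin N)) : ℕ :=
  (Finset.univ.filter fun x : Fin N × Fin N × Fin N =>
    σ (x.1, x.2.1) = τ (x.1, x.2.2) ∨ σ (x.1, x.2.1) = τ (x.2.2, x.2.1)).card

/-- `Y_N(σ,τ) = Y_{1,N}(σ,τ) + Y_{2,N}(σ,τ)` where `Y_{1,N}` counts the triples `(i,j,k)` with
`π1(σ(i,j)) ∈ {π1(τ(i,k)), π1(τ(k,j))}`, and `Y_{2,N}` the ones with
`π2(σ(i,j)) ∈ {π2(τ(i,k)), π2(τ(k,j))}`. -/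
def Ycnt (N : ℕ) (σ τ : Equiv.Perm (Fin N × Fin N)) : ℕ :=
  (Finset.univ.filter fun x : Fin N × Fin N × Fin N =>
    (σ (x.1, x.2.1)).1 = (τ (x.1, x.2.2)).1 ∨ (σ (x.1, x.2.1)).1 = (τ (x.2.2, x.2.1)).1).card +
  (Finset.univ.filter fun x : Fin N × Fin N × Fin N =>
    (σ (x.1, x.2.1)).2 = (τ (x.1, x.2.2)).2 ∨ (σ (x.1, x.2.1)).2 = (τ (x.2.2, x.2.1)).2).card

/-- `Z_N(σ)`, as in condition (C1). -/
def Zcnt (N : ℕ) (σ : Equiv.Perm (Fin N × Fin N)) : ℕ :=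
  (Finset.univ.filter fun x : Fin N × Fin N × Fin N × Fin N =>
    σ (x.1, x.2.1) = ((σ (x.1, x.2.2.2)).1, (σ (x.2.2.1, x.2.1)).2)).card +
  (Finset.univ.filter fun x : Fin N × Fin N × Fin N × Fin N =>
    σ (x.1, x.2.1) = ((σ (x.2.2.1, x.2.1)).1, (σ (x.1, x.2.2.2)).2)).card

/-!
Forgetting `k` maps the quadruples `(i,j,k,l)` counted by the first (second) term of `Z_N(σ)` at
most `N`-to-one to triples `(i,j,l)` with `π1 σ(i,j) = π1 σ(i,l)` (resp. `π2`), which are counted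
by `Y_{1,N}(σ,σ)` (resp. `Y_{2,N}(σ,σ)`).

A triple counted by `X_N(σ, id)` has `σ(i,j) = (i,k)` or `σ(i,j) = (k,j)`, so it is determined by
the point `(i,j)` of `fixFst σ` or of `fixSnd σ`. Two points of `fixFst σ` in a common row give a
triple counted by `Y_{1,N}(σ,σ)`, so Cauchy–Schwarz over the rows gives
`|fixFst σ|² ≤ N · Y_{1,N}(σ,σ)`, and likewise over the columns for `fixSnd σ`. Hence
`(X_N(σ, id) / N²)² ≤ 2 Y_N(σ,σ) / N³`.
-/

section Counting

variable {α β γ : Type*}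

theorem card_le_card_mul_card_of_injOn_prod [Fintype γ] {s : Finset α} {t : Finset β}
    (f : α → β) (g : α → γ) (hf : ∀ a ∈ s, f a ∈ t)
    (hfg : Set.InjOn (fun a => (f a, g a)) s) :
    #s ≤ #t * Fintype.card γ := by
  rw [← card_univ, ← card_product]
  exact card_le_card_of_injOn _ (fun a ha => by simpa using hf a ha) hfg

theorem card_sq_le_card_mul_card_filter_eq [Fintype β] [DecidableEq β] (s : Finset α)
    (g : α → β) : #s ^ 2 ≤ Fintype.card β * #{p ∈ s ×ˢ s | g p.1 = g p.2} := by
  have fibre_prod (b : β) : {p ∈ {p ∈ s ×ˢ s | g p.1 = g p.2} | g p.1 = b} =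
      {a ∈ s | g a = b} ×ˢ {a ∈ s | g a = b} := by
    ext p
    simp only [mem_filter, mem_product]
    grind
  calc #s ^ 2 = (∑ b, #{a ∈ s | g a = b}) ^ 2 := by
        rw [card_eq_sum_card_fiberwise fun a _ => mem_univ (g a)]
    _ ≤ Fintype.card β * ∑ b, #{a ∈ s | g a = b} ^ 2 := sq_sum_le_card_mul_sum_sq
    _ = Fintype.card β * #{p ∈ s ×ˢ s | g p.1 = g p.2} := by
        rw [card_eq_sum_card_fiberwise (f := fun p => g p.1) fun p _ => mem_univ _]
        simp only [fibre_prod, card_product, sq]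

end Counting

theorem tendsto_zero_of_sq_le {ι : Type*} {l : Filter ι} {f g : ι → ℝ}
    (hfg : ∀ i, f i ^ 2 ≤ g i) (hg : Tendsto g l (nhds 0)) : Tendsto f l (nhds 0) := by
  refine squeeze_zero_norm (fun i => Real.abs_le_sqrt (hfg i)) ?_
  simpa using hg.sqrt

theorem Nat.cast_div_pow_succ_le {a b n : ℕ} (k : ℕ) (h : a ≤ n * b) :
    (a : ℝ) / n ^ (k + 1) ≤ b / n ^ k := by
  rcases n.eq_zero_or_pos with rfl | hn
  · obtain rfl : a = 0 := by omega
    simp only [CharP.cast_eq_zero, zero_div]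
    positivity
  have h' : (a : ℝ) ≤ n * b := by exact_mod_cast h
  rw [div_le_div_iff₀ (by positivity) (by positivity)]
  calc (a : ℝ) * n ^ k ≤ n * b * n ^ k := by gcongr
    _ = b * n ^ (k + 1) := by ring

def Y1cnt (N : ℕ) (σ τ : Equiv.Perm (Fin N × Fin N)) : ℕ :=
  #{x : Fin N × Fin N × Fin N |
    (σ (x.1, x.2.1)).1 = (τ (x.1, x.2.2)).1 ∨ (σ (x.1, x.2.1)).1 = (τ (x.2.2, x.2.1)).1}

def Y2cnt (N : ℕ) (σ τ : Equiv.Perm (Fin N × Fin N)) : ℕ :=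
  #{x : Fin N × Fin N × Fin N |
    (σ (x.1, x.2.1)).2 = (τ (x.1, x.2.2)).2 ∨ (σ (x.1, x.2.1)).2 = (τ (x.2.2, x.2.1)).2}

section Permutations

variable {N : ℕ}

theorem Ycnt_eq_add (σ τ : Equiv.Perm (Fin N × Fin N)) :
    Ycnt N σ τ = Y1cnt N σ τ + Y2cnt N σ τ := rfl

variable (σ : Equiv.Perm (Fin N × Fin N))

theorem Zcnt_le_mul_Ycnt : Zcnt N σ ≤ N * Ycnt N σ σ := by
  have hinj : Function.Injective fun x : Fin N × Fin N × Fin N × Fin N =>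
      ((x.1, x.2.1, x.2.2.2), x.2.2.1) := by
    intro x y h
    simp only [Prod.ext_iff] at h ⊢
    tauto
  have first : #{x : Fin N × Fin N × Fin N × Fin N |
      σ (x.1, x.2.1) = ((σ (x.1, x.2.2.2)).1, (σ (x.2.2.1, x.2.1)).2)} ≤
      Y1cnt N σ σ * Fintype.card (Fin N) :=
    card_le_card_mul_card_of_injOn_prod _ _ (fun x hx => by
      simp only [mem_filter, mem_univ, true_and] at hx ⊢
      exact Or.inl (by rw [hx])) hinj.injOn
  have second : #{x : Fin N × Fin N × Fin N × Fin N |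
      σ (x.1, x.2.1) = ((σ (x.2.2.1, x.2.1)).1, (σ (x.1, x.2.2.2)).2)} ≤
      Y2cnt N σ σ * Fintype.card (Fin N) :=
    card_le_card_mul_card_of_injOn_prod _ _ (fun x hx => by
      simp only [mem_filter, mem_univ, true_and] at hx ⊢
      exact Or.inl (by rw [hx])) hinj.injOn
  rw [Fintype.card_fin] at first second
  unfold Zcnt
  rw [Ycnt_eq_add]
  linarith

def fixFst : Finset (Fin N × Fin N) := {p | (σ p).1 = p.1}

def fixSnd : Finset (Fin N × Fin N) := {p | (σ p).2 = p.2}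

theorem Xcnt_refl_le : Xcnt N σ (Equiv.refl _) ≤ #(fixFst σ) + #(fixSnd σ) := by
  unfold Xcnt
  rw [filter_or]
  refine (card_union_le _ _).trans (add_le_add ?_ ?_)
  · refine le_trans (card_le_card fun x hx => ?_)
      (card_image_le (f := fun p => (p.1, p.2, (σ p).2)))
    have hx := (mem_filter.1 hx).2
    simp only [fixFst, mem_filter, mem_univ, true_and, mem_image]
    exact ⟨(x.1, x.2.1), by simp [hx], by simp [hx]⟩
  · refine le_trans (card_le_card fun x hx => ?_)
      (card_image_le (f := fun p => (p.1, p.2, (σ p).1)))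
    have hx := (mem_filter.1 hx).2
    simp only [fixSnd, mem_filter, mem_univ, true_and, mem_image]
    exact ⟨(x.1, x.2.1), by simp [hx], by simp [hx]⟩

theorem card_fixFst_sq_le : #(fixFst σ) ^ 2 ≤ N * Y1cnt N σ σ := by
  calc #(fixFst σ) ^ 2
      ≤ Fintype.card (Fin N) * #{q ∈ fixFst σ ×ˢ fixFst σ | q.1.1 = q.2.1} :=
        card_sq_le_card_mul_card_filter_eq _ Prod.fst
    _ ≤ N * Y1cnt N σ σ := by
        rw [Fintype.card_fin]
        gcongr
        refine card_le_card_of_injOn (fun q => (q.1.1, q.1.2, q.2.2)) (fun q hq => ?_)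
          (fun q hq r hr h => ?_)
        · simp only [fixFst, coe_filter, mem_filter, mem_product, mem_univ, true_and,
            Set.mem_ofPred_eq] at hq ⊢
          grind
        · simp only [fixFst, coe_filter, mem_filter, mem_product, mem_univ, true_and,
            Set.mem_ofPred_eq, Prod.ext_iff] at hq hr h ⊢
          grind

theorem card_fixSnd_sq_le : #(fixSnd σ) ^ 2 ≤ N * Y2cnt N σ σ := by
  calc #(fixSnd σ) ^ 2
      ≤ Fintype.card (Fin N) * #{q ∈ fixSnd σ ×ˢ fixSnd σ | q.1.2 = q.2.2} :=
        card_sq_le_card_mul_card_filter_eq _ Prod.snd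
    _ ≤ N * Y2cnt N σ σ := by
        rw [Fintype.card_fin]
        gcongr
        refine card_le_card_of_injOn (fun q => (q.1.1, q.1.2, q.2.1)) (fun q hq => ?_)
          (fun q hq r hr h => ?_)
        · simp only [fixSnd, coe_filter, mem_filter, mem_product, mem_univ, true_and,
            Set.mem_ofPred_eq] at hq ⊢
          grind
        · simp only [fixSnd, coe_filter, mem_filter, mem_product, mem_univ, true_and,
            Set.mem_ofPred_eq, Prod.ext_iff] at hq hr h ⊢
          grind

theorem Xcnt_refl_sq_le : Xcnt N σ (Equiv.refl _) ^ 2 ≤ N * (2 * Ycnt N σ σ) :=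
  calc Xcnt N σ (Equiv.refl _) ^ 2 ≤ (#(fixFst σ) + #(fixSnd σ)) ^ 2 := by
        gcongr; exact Xcnt_refl_le σ
    _ ≤ 2 * (#(fixFst σ) ^ 2 + #(fixSnd σ) ^ 2) := add_sq_le
    _ ≤ N * (2 * Ycnt N σ σ) := by
        rw [Ycnt_eq_add]
        linarith [card_fixFst_sq_le σ, card_fixSnd_sq_le σ]

end Permutations

theorem stmt3 :
    (∀ (N : ℕ), 1 ≤ N → ∀ σ : Equiv.Perm (Fin N × Fin N), Zcnt N σ ≤ N * Ycnt N σ σ) ∧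
    (∀ σ : (N : ℕ) → Equiv.Perm (Fin N × Fin N),
      Tendsto (fun N : ℕ => (Ycnt N (σ N) (σ N) : ℝ) / (N : ℝ) ^ 3) atTop (nhds 0) →
      Tendsto (fun N : ℕ => (Zcnt N (σ N) : ℝ) / (N : ℝ) ^ 4) atTop (nhds 0) ∧
      Tendsto (fun N : ℕ => (Xcnt N (σ N) (Equiv.refl (Fin N × Fin N)) : ℝ) / (N : ℝ) ^ 2)
        atTop (nhds 0)) := by
  refine ⟨fun N _ σ => Zcnt_le_mul_Ycnt σ, fun σ hY => ⟨?_, ?_⟩⟩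
  · refine squeeze_zero (fun N => by positivity) (fun N => ?_) hY
    exact Nat.cast_div_pow_succ_le 3 (Zcnt_le_mul_Ycnt (σ N))
  · refine tendsto_zero_of_sq_le (fun N => ?_) (by simpa using hY.const_mul 2)
    calc ((Xcnt N (σ N) (Equiv.refl _) : ℝ) / (N : ℝ) ^ 2) ^ 2
        = ((Xcnt N (σ N) (Equiv.refl _) ^ 2 : ℕ) : ℝ) / (N : ℝ) ^ (3 + 1) := by
          push_cast; ring
      _ ≤ ((2 * Ycnt N (σ N) (σ N) : ℕ) : ℝ) / (N : ℝ) ^ 3 :=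
          Nat.cast_div_pow_succ_le 3 (Xcnt_refl_sq_le (σ N))
      _ = 2 * ((Ycnt N (σ N) (σ N) : ℝ) / (N : ℝ) ^ 3) := by
          push_cast; ring
end

section
/- Let (σ_N)_N be a sequence of permutations, σ_N a permutation of [N]×[N], satisfying condition (C2), i.e. X_N(σ_N, id)/N² → 0 where id is the identity permutation of [N]×[N]. Then Y_N(σ_N, id) = o(N³), i.e. Y_N(σ_N, id)/N³ → 0 as N → ∞. -/
open Filter

/-!
For `τ = id`, a triple `(i, j, k)` counts for `Y₁` either because `σ(i, j)` stays in row `i`, or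
because `k` is the row of `σ(i, j)`; the latter happens for exactly `N²` triples. Every pair `(i, j)`
whose image stays in its row yields the triple `(i, j, k)` of `X`, `k` being the column of `σ(i, j)`,
so there are at most `X` such pairs and at most `N X` triples of the first kind. With the symmetric
argument for `Y₂` this gives `Y ≤ 2 N X + 2 N²`, hence `Y / N³ ≤ 2 X / N² + 2 / N → 0`.
-/

open Finset

section TripleCounts

variable {α : Type*} [Fintype α]

theorem card_filter_triple_eq_mul (p : α × α → Prop) [DecidablePred p] :
    #{x : α × α × α | p (x.1, x.2.1)} = #{q : α × α | p q} * Fintype.card α := by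
  have : ({x : α × α × α | p (x.1, x.2.1)} : Finset _) =
      ((univ.filter p) ×ˢ univ).map (Equiv.prodAssoc α α α).toEmbedding := by
    ext ⟨i, j, k⟩; simp
  rw [this, card_map, card_product, card_univ]

theorem card_filter_apply_eq_third [DecidableEq α] (f : α × α → α) :
    #{x : α × α × α | f (x.1, x.2.1) = x.2.2} = Fintype.card α ^ 2 := by
  have : ({x : α × α × α | f (x.1, x.2.1) = x.2.2} : Finset _) =
      univ.map ⟨fun q => (q.1, q.2, f q),
        fun q r h => Prod.ext (congrArg (·.1) h) (congrArg (·.2.1) h)⟩ := by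
    ext x
    simp only [mem_filter, mem_univ, true_and, Finset.mem_map]
    constructor
    · intro hx; exact ⟨(x.1, x.2.1), Prod.ext rfl (Prod.ext rfl hx)⟩
    · rintro ⟨q, rfl⟩; rfl
  rw [this, card_map, card_univ, Fintype.card_prod, sq]

end TripleCounts

theorem card_filter_fst_eq_le_Xcnt {N : ℕ} (σ : Equiv.Perm (Fin N × Fin N)) :
    #{q : Fin N × Fin N | (σ q).1 = q.1} ≤ Xcnt N σ (Equiv.refl _) :=
  card_le_card_of_injOn (fun q => (q.1, q.2, (σ q).2))
    (fun q hq => by simp_all [Prod.ext_iff]) (fun q _ r _ h => by simp_all [Prod.ext_iff])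

theorem card_filter_snd_eq_le_Xcnt {N : ℕ} (σ : Equiv.Perm (Fin N × Fin N)) :
    #{q : Fin N × Fin N | (σ q).2 = q.2} ≤ Xcnt N σ (Equiv.refl _) :=
  card_le_card_of_injOn (fun q => (q.1, q.2, (σ q).1))
    (fun q hq => by simp_all [Prod.ext_iff]) (fun q _ r _ h => by simp_all [Prod.ext_iff])

theorem Ycnt_refl_le (N : ℕ) (σ : Equiv.Perm (Fin N × Fin N)) :
    Ycnt N σ (Equiv.refl _) ≤ 2 * N * Xcnt N σ (Equiv.refl _) + 2 * N ^ 2 := by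
  have hY₁ : #{x : Fin N × Fin N × Fin N | (σ (x.1, x.2.1)).1 = x.1 ∨ (σ (x.1, x.2.1)).1 = x.2.2}
      ≤ N * Xcnt N σ (Equiv.refl _) + N ^ 2 := by
    rw [filter_or]
    refine (card_union_le _ _).trans (add_le_add ?_ ?_)
    · rw [card_filter_triple_eq_mul (fun q => (σ q).1 = q.1), Fintype.card_fin, mul_comm]
      exact Nat.mul_le_mul_left N (card_filter_fst_eq_le_Xcnt σ)
    · rw [card_filter_apply_eq_third (fun q => (σ q).1), Fintype.card_fin]
  have hY₂ : #{x : Fin N × Fin N × Fin N | (σ (x.1, x.2.1)).2 = x.2.2 ∨ (σ (x.1, x.2.1)).2 = x.2.1}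
      ≤ N * Xcnt N σ (Equiv.refl _) + N ^ 2 := by
    rw [filter_or, add_comm]
    refine (card_union_le _ _).trans (add_le_add ?_ ?_)
    · rw [card_filter_apply_eq_third (fun q => (σ q).2), Fintype.card_fin]
    · rw [card_filter_triple_eq_mul (fun q => (σ q).2 = q.2), Fintype.card_fin, mul_comm]
      exact Nat.mul_le_mul_left N (card_filter_snd_eq_le_Xcnt σ)
  simp only [Ycnt, Equiv.refl_apply]
  exact (add_le_add hY₁ hY₂).trans_eq (by ring)

theorem stmt4 (σ : (N : ℕ) → Equiv.Perm (Fin N × Fin N))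
    (hC2 : Tendsto (fun N : ℕ => (Xcnt N (σ N) (Equiv.refl (Fin N × Fin N)) : ℝ) / (N : ℝ) ^ 2)
      atTop (nhds 0)) :
    Tendsto (fun N : ℕ => (Ycnt N (σ N) (Equiv.refl (Fin N × Fin N)) : ℝ) / (N : ℝ) ^ 3)
      atTop (nhds 0) := by
  have hbound : Tendsto (fun N : ℕ =>
      2 * ((Xcnt N (σ N) (Equiv.refl _) : ℝ) / (N : ℝ) ^ 2) + 2 / (N : ℝ)) atTop (nhds 0) := by
    simpa using (hC2.const_mul 2).add (tendsto_const_div_atTop_nhds_zero_nat 2)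
  refine squeeze_zero' (Eventually.of_forall fun N => by positivity) ?_ hbound
  filter_upwards [eventually_gt_atTop 0] with N hN
  have hN' : (0 : ℝ) < N := by exact_mod_cast hN
  have hY : (Ycnt N (σ N) (Equiv.refl _) : ℝ) ≤
      2 * N * Xcnt N (σ N) (Equiv.refl _) + 2 * (N : ℝ) ^ 2 := by
    exact_mod_cast Ycnt_refl_le N (σ N)
  calc (Ycnt N (σ N) (Equiv.refl _) : ℝ) / (N : ℝ) ^ 3
      ≤ (2 * N * Xcnt N (σ N) (Equiv.refl _) + 2 * (N : ℝ) ^ 2) / (N : ℝ) ^ 3 := by gcongr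
    _ = 2 * ((Xcnt N (σ N) (Equiv.refl _) : ℝ) / (N : ℝ) ^ 2) + 2 / (N : ℝ) := by
      field_simp
end

section
/- With the data fixed as in the context, let B be a block of the partition p∨q, let m ∈ B, and suppose B \ {m} ⊆ S for a subset S ⊆ [2n]. Then F(S ∪ {m}) = F(S). -/
open Filter

/-- `(k_s, l_s) = σ_s ∘ ε_s (i_s, j_s)`. -/
def klMap {n N : ℕ} (ε : Fin (2 * n) → Bool) (σ : Fin (2 * n) → Equiv.Perm (Fin N × Fin N))
    (x : (Fin (2 * n) → Fin N) × (Fin (2 * n) → Fin N)) (s : Fin (2 * n)) : Fin N × Fin N :=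
  if ε s then (σ s) (x.1 s, x.2 s) else (σ s) (x.2 s, x.1 s)

/-- The set `A^{(p,q)}` of tuples `(i_1, j_1, …, i_{2n}, j_{2n})` with `j_s = i_{s+1}`
(cyclically, so that `j_{2n} = i_1`), `k_s = k_{p(s)}` and `l_s = l_{q(s)}` for all `s`. -/
def tupleSet (n N : ℕ) (ε : Fin (2 * n) → Bool) (σ : Fin (2 * n) → Equiv.Perm (Fin N × Fin N))
    (p q : Equiv.Perm (Fin (2 * n))) :
    Finset ((Fin (2 * n) → Fin N) × (Fin (2 * n) → Fin N)) :=
  Finset.univ.filter fun x =>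
    (∀ s, x.2 s = x.1 (finRotate (2 * n) s)) ∧
    (∀ s, (klMap ε σ x s).1 = (klMap ε σ x (p s)).1) ∧
    (∀ s, (klMap ε σ x s).2 = (klMap ε σ x (q s)).2)

/-- `F(S)`:  the number of families `(i_s, j_s)_{s ∈ S}` that extend to an element of
`A^{(p,q)}`. -/
def Fcnt (n N : ℕ) (ε : Fin (2 * n) → Bool) (σ : Fin (2 * n) → Equiv.Perm (Fin N × Fin N))
    (p q : Equiv.Perm (Fin (2 * n))) (S : Finset (Fin (2 * n))) : ℕ :=
  ((tupleSet n N ε σ p q).image fun x => fun s : {a // a ∈ S} => (x.1 s.1, x.2 s.1)).card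

/-- The join `p ∨ q` of the two pair partitions, as an equivalence relation:  the equivalence
closure of the relation relating `a` with `p a` and with `q a`.  Its classes are the blocks of
`p ∨ q`. -/
def joinRel {m : ℕ} (p q : Equiv.Perm (Fin m)) : Fin m → Fin m → Prop :=
  Relation.EqvGen fun a b => p a = b ∨ q a = b

/-- If `B` is the block of `p ∨ q` containing `m` and `B \ {m} ⊆ S`, then
`F(S ∪ {m}) = F(S)`. -/
theorem stmt6 (n N : ℕ) (hn : 1 ≤ n) (hN : 1 ≤ N)
    (ε : Fin (2 * n) → Bool) (σ : Fin (2 * n) → Equiv.Perm (Fin N × Fin N))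
    (p q : Equiv.Perm (Fin (2 * n)))
    (hp : Function.Involutive p) (hq : Function.Involutive q)
    (hpf : ∀ s, p s ≠ s) (hqf : ∀ s, q s ≠ s)
    (hpε : ∀ s, ε (p s) ≠ ε s) (hqε : ∀ s, ε (q s) ≠ ε s)
    (S : Finset (Fin (2 * n))) (m : Fin (2 * n))
    (hBS : ∀ x, joinRel p q m x → x ≠ m → x ∈ S) :
    Fcnt n N ε σ p q (insert m S) = Fcnt n N ε σ p q S := by
  by_cases hm : m ∈ S
  · rw [Finset.insert_eq_self.mpr hm]
  · have hpm : p m ∈ S := hBS _ (Relation.EqvGen.rel _ _ (Or.inl rfl)) (hpf m)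
    have hqm : q m ∈ S := hBS _ (Relation.EqvGen.rel _ _ (Or.inr rfl)) (hqf m)
    have key : ∀ x ∈ tupleSet n N ε σ p q, ∀ y ∈ tupleSet n N ε σ p q,
        (∀ s, s ∈ S → (x.1 s, x.2 s) = (y.1 s, y.2 s)) →
        (x.1 m, x.2 m) = (y.1 m, y.2 m) := by
      intro x hx y hy h
      simp only [tupleSet, Finset.mem_filter] at hx hy
      obtain ⟨-, -, hxp, hxq⟩ := hx
      obtain ⟨-, -, hyp, hyq⟩ := hy
      have h1 : x.1 (p m) = y.1 (p m) := congrArg Prod.fst (h _ hpm)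
      have h2 : x.2 (p m) = y.2 (p m) := congrArg Prod.snd (h _ hpm)
      have h3 : x.1 (q m) = y.1 (q m) := congrArg Prod.fst (h _ hqm)
      have h4 : x.2 (q m) = y.2 (q m) := congrArg Prod.snd (h _ hqm)
      have hk : (klMap ε σ x m).1 = (klMap ε σ y m).1 := by
        rw [hxp m, hyp m]; unfold klMap; rw [h1, h2]
      have hl : (klMap ε σ x m).2 = (klMap ε σ y m).2 := by
        rw [hxq m, hyq m]; unfold klMap; rw [h3, h4]
      have hkl : klMap ε σ x m = klMap ε σ y m := Prod.ext hk hl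
      unfold klMap at hkl
      by_cases hε : ε m
      · simp only [hε, if_true] at hkl
        exact (σ m).injective hkl
      · simp only [hε, if_false] at hkl
        have := (σ m).injective hkl
        exact Prod.ext (congrArg Prod.snd this) (congrArg Prod.fst this)
    unfold Fcnt
    rw [show ((tupleSet n N ε σ p q).image fun x => fun s : {a // a ∈ S} => (x.1 s.1, x.2 s.1)) =
        (((tupleSet n N ε σ p q).image
            fun x => fun s : {a // a ∈ insert m S} => (x.1 s.1, x.2 s.1)).image
          fun g => fun s : {a // a ∈ S} => g ⟨s.1, Finset.mem_insert_of_mem s.2⟩) from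
      by rw [Finset.image_image]; rfl]
    refine (Finset.card_image_of_injOn ?_).symm
    intro g1 hg1 g2 hg2 hgg
    simp only [Finset.coe_image, Set.mem_image, Finset.mem_coe] at hg1 hg2
    obtain ⟨x, hx, rfl⟩ := hg1
    obtain ⟨y, hy, rfl⟩ := hg2
    have hS : ∀ s, s ∈ S → (x.1 s, x.2 s) = (y.1 s, y.2 s) := by
      intro s hs
      exact congrFun hgg ⟨s, hs⟩
    funext s
    rcases Finset.mem_insert.mp s.2 with h | h
    · have := key x hx y hy hS
      simp only [h]
      exact this
    · exact hS s.1 h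
end

section
/- With the data fixed as in the context, for all integers m, m' ≥ 1 with m + m' ≤ 2n, one has F(m + m') ≤ F(m) · N^{ m' − t }, where t is the number of blocks B of the partition p∨q with m < max(B) ≤ m + m'. -/
open Filter

/-- The set `{1, …, m}` of the paper, in `0`-based indexing: the first `m` indices. -/
def initSeg (n m : ℕ) : Finset (Fin (2 * n)) :=
  Finset.univ.filter fun s => (s : ℕ) < m

/-!
Restricting a tuple of `A^{(p,q)}` to the first `m` indices and recording `j_s` at those
`s ∈ [m, m + m')` that are not the largest element of their block of `p ∨ q` loses no
information about its first `m + m'` entries. Indeed, going up from `s = m`, `i_s = j_{s-1}`,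
and if `s` is the largest element of its block then `p s, q s < s`, so `k_s = k_{p s}` and
`l_s = l_{q s}` are already known and `(i_s, j_s)` is recovered by inverting `σ_s`.
Hence `F(m + m') ≤ F(m) ⬝ N^{m' - t}`.
-/

open Finset

theorem Finset.card_le_card_image_mul_card {β γ δ : Type*} [DecidableEq γ] [Fintype δ]
    {t : Finset β} (g : β → γ) (h : β → δ) (hgh : Set.InjOn (fun b => (g b, h b)) t) :
    #t ≤ #(t.image g) * Fintype.card δ := by
  calc #t ≤ #(t.image g ×ˢ (univ : Finset δ)) :=
        card_le_card_of_injOn _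
          (fun b hb => mem_product.2 ⟨mem_image_of_mem g hb, mem_univ _⟩) hgh
    _ = #(t.image g) * Fintype.card δ := by rw [card_product, card_univ]

def window (k m T : ℕ) : Finset (Fin k) := univ.filter fun s => m ≤ (s : ℕ) ∧ (s : ℕ) < T

lemma card_window {k m m' : ℕ} (h : m + m' ≤ k) : #(window k m (m + m')) = m' := by
  have hlt : ∀ a ∈ Ico m (m + m'), a < k := fun a ha => by
    rw [mem_Ico] at ha; omega
  have : window k m (m + m') = (Ico m (m + m')).attachFin hlt := by
    ext s; simp [window, mem_attachFin]
  rw [this, card_attachFin, Nat.card_Ico]; omega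

section Blocks

variable {k : ℕ} (p q : Equiv.Perm (Fin k))

def IsBlockMax (s : Fin k) : Prop := ∀ u, joinRel p q s u → u ≤ s

open Classical in
noncomputable def blockMaxesIn (m T : ℕ) : Finset (Fin k) :=
  (window k m T).filter (IsBlockMax p q)

open Classical in
noncomputable def nonMaxesIn (m T : ℕ) : Finset (Fin k) :=
  (window k m T).filter fun s => ¬ IsBlockMax p q s

lemma card_blockMaxesIn_add_card_nonMaxesIn (m T : ℕ) :
    #(blockMaxesIn p q m T) + #(nonMaxesIn p q m T) = #(window k m T) := by
  classical
  exact card_filter_add_card_filter_not _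

variable {p q}

lemma joinRel_apply_left (s : Fin k) : joinRel p q s (p s) := Relation.EqvGen.rel _ _ (.inl rfl)

lemma joinRel_apply_right (s : Fin k) : joinRel p q s (q s) := Relation.EqvGen.rel _ _ (.inr rfl)

lemma joinRel_equivalence : Equivalence (joinRel p q) := Relation.EqvGen.is_equivalence _

lemma setOf_joinRel_eq_iff {a b : Fin k} :
    {x | joinRel p q a x} = {x | joinRel p q b x} ↔ joinRel p q a b := by
  refine ⟨fun h => ?_, fun h => Set.ext fun x => ?_⟩
  · have : b ∈ {x | joinRel p q b x} := joinRel_equivalence.refl b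
    rwa [← h] at this
  · exact ⟨joinRel_equivalence.trans (joinRel_equivalence.symm h), joinRel_equivalence.trans h⟩

lemma exists_isBlockMax (a : Fin k) : ∃ s, joinRel p q a s ∧ IsBlockMax p q s := by
  obtain ⟨s, has, hmax⟩ := Set.exists_max_image {x | joinRel p q a x} id (Set.toFinite _)
    ⟨a, joinRel_equivalence.refl a⟩
  exact ⟨s, has, fun u hsu => hmax u (joinRel_equivalence.trans has hsu)⟩

lemma IsBlockMax.lt {s u : Fin k} (hs : IsBlockMax p q s) (hsu : joinRel p q s u) (hne : u ≠ s) :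
    u < s :=
  lt_of_le_of_ne (hs u hsu) hne

lemma IsBlockMax.eq {s s' : Fin k} (hs : IsBlockMax p q s) (hs' : IsBlockMax p q s')
    (h : joinRel p q s s') : s = s' :=
  le_antisymm (hs' s (joinRel_equivalence.symm h)) (hs s' h)

lemma blocks_eq_image_blockMaxesIn (m T : ℕ) :
    {B : Set (Fin k) | (∃ a, B = {x | joinRel p q a x}) ∧
      (∃ x ∈ B, m ≤ (x : ℕ)) ∧ ∀ x ∈ B, (x : ℕ) < T} =
      (fun s => {x | joinRel p q s x}) '' ↑(blockMaxesIn p q m T) := by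
  ext B
  simp only [Set.mem_ofPred_eq, Set.mem_image, mem_coe, blockMaxesIn, window, mem_filter,
    mem_univ, true_and]
  constructor
  · rintro ⟨⟨a, rfl⟩, ⟨x, hax, hmx⟩, hlt⟩
    obtain ⟨s, has, hs⟩ := exists_isBlockMax (p := p) (q := q) a
    refine ⟨s, ⟨⟨hmx.trans (hs x ?_), hlt s has⟩, hs⟩, setOf_joinRel_eq_iff.2 ?_⟩
    · exact joinRel_equivalence.trans (joinRel_equivalence.symm has) hax
    · exact joinRel_equivalence.symm has
  · rintro ⟨s, ⟨⟨hms, hsT⟩, hs⟩, rfl⟩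
    exact ⟨⟨s, rfl⟩, ⟨s, joinRel_equivalence.refl s, hms⟩,
      fun x hsx => (Fin.le_def.1 (hs x hsx)).trans_lt hsT⟩

lemma ncard_blocks_eq_card_blockMaxesIn (m T : ℕ) :
    Set.ncard {B : Set (Fin k) | (∃ a, B = {x | joinRel p q a x}) ∧
      (∃ x ∈ B, m ≤ (x : ℕ)) ∧ ∀ x ∈ B, (x : ℕ) < T} = #(blockMaxesIn p q m T) := by
  rw [blocks_eq_image_blockMaxesIn, Set.InjOn.ncard_image, Set.ncard_coe_finset]
  intro s hs s' hs' h
  simp only [blockMaxesIn, coe_filter, Set.mem_ofPred_eq] at hs hs'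
  exact hs.2.eq hs'.2 (setOf_joinRel_eq_iff.1 h)

end Blocks

section Tuples

variable {n N : ℕ} {ε : Fin (2 * n) → Bool} {σ : Fin (2 * n) → Equiv.Perm (Fin N × Fin N)}
  {p q : Equiv.Perm (Fin (2 * n))} {x x' : (Fin (2 * n) → Fin N) × (Fin (2 * n) → Fin N)}

lemma klMap_eq_klMap_iff {s : Fin (2 * n)} :
    klMap ε σ x s = klMap ε σ x' s ↔ (x.1 s, x.2 s) = (x'.1 s, x'.2 s) := by
  unfold klMap
  split_ifs
  · exact (σ s).injective.eq_iff
  · rw [(σ s).injective.eq_iff]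
    simp only [Prod.mk.injEq, and_comm]

lemma fst_finRotate_of_mem_tupleSet (hx : x ∈ tupleSet n N ε σ p q) (s : Fin (2 * n)) :
    x.1 (finRotate _ s) = x.2 s :=
  ((mem_filter.1 hx).2.1 s).symm

lemma klMap_of_mem_tupleSet (hx : x ∈ tupleSet n N ε σ p q) (s : Fin (2 * n)) :
    klMap ε σ x s = ((klMap ε σ x (p s)).1, (klMap ε σ x (q s)).2) :=
  Prod.ext ((mem_filter.1 hx).2.2.1 s) ((mem_filter.1 hx).2.2.2 s)

theorem entry_eq_of_mem_tupleSet (hpf : ∀ s, p s ≠ s) (hqf : ∀ s, q s ≠ s) {m T : ℕ}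
    (hm : 1 ≤ m) (hx : x ∈ tupleSet n N ε σ p q) (hx' : x' ∈ tupleSet n N ε σ p q)
    (hlow : ∀ s : Fin (2 * n), (s : ℕ) < m → (x.1 s, x.2 s) = (x'.1 s, x'.2 s))
    (hfree : ∀ s ∈ nonMaxesIn p q m T, x.2 s = x'.2 s) (s : Fin (2 * n)) (hsT : (s : ℕ) < T) :
    (x.1 s, x.2 s) = (x'.1 s, x'.2 s) := by
  induction s using WellFoundedLT.induction with
  | ind s ih =>
  rcases lt_or_ge (s : ℕ) m with hsm | hsm
  · exact hlow s hsm
  have hfst : x.1 s = x'.1 s := by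
    have := s.neZero
    obtain ⟨t, rfl⟩ := (finRotate _).surjective s
    have hts : t < finRotate _ t := by
      simpa using (finRotate_symm_lt_iff_ne_zero (finRotate _ t)).2
        (Fin.val_ne_zero_iff.1 (by omega))
    rw [fst_finRotate_of_mem_tupleSet hx, fst_finRotate_of_mem_tupleSet hx']
    exact congrArg Prod.snd (ih t hts ((Fin.lt_def.1 hts).trans hsT))
  by_cases hmax : IsBlockMax p q s
  · have hp := hmax.lt (joinRel_apply_left s) (hpf s)
    have hq := hmax.lt (joinRel_apply_right s) (hqf s)
    rw [← klMap_eq_klMap_iff (ε := ε) (σ := σ), klMap_of_mem_tupleSet hx,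
      klMap_of_mem_tupleSet hx', klMap_eq_klMap_iff.2 (ih _ hp ((Fin.lt_def.1 hp).trans hsT)),
      klMap_eq_klMap_iff.2 (ih _ hq ((Fin.lt_def.1 hq).trans hsT))]
  · exact Prod.ext hfst (hfree s (by simp [nonMaxesIn, window, hmax, hsm, hsT]))

theorem Fcnt_initSeg_le (hpf : ∀ s, p s ≠ s) (hqf : ∀ s, q s ≠ s) {m T : ℕ} (hm : 1 ≤ m)
    (hmT : m ≤ T) :
    Fcnt n N ε σ p q (initSeg n T) ≤
      Fcnt n N ε σ p q (initSeg n m) * N ^ #(nonMaxesIn p q m T) := by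
  have hmT' : initSeg n m ⊆ initSeg n T := fun s hs => by
    simp only [initSeg, mem_filter, mem_univ, true_and] at hs ⊢; omega
  have hfreeT : nonMaxesIn p q m T ⊆ initSeg n T := fun s hs => by
    simp only [nonMaxesIn, window, initSeg, mem_filter, mem_univ, true_and] at hs ⊢; exact hs.1.2
  let restrict (y : {a // a ∈ initSeg n T} → Fin N × Fin N) (s : {a // a ∈ initSeg n m}) :=
    y ⟨s, hmT' s.2⟩
  let freeEntries (y : {a // a ∈ initSeg n T} → Fin N × Fin N)
      (s : {a // a ∈ nonMaxesIn p q m T}) :=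
    (y ⟨s, hfreeT s.2⟩).2
  have key := card_le_card_image_mul_card restrict freeEntries
    (t := (tupleSet n N ε σ p q).image fun x (s : {a // a ∈ initSeg n T}) => (x.1 s, x.2 s)) ?_
  · rwa [image_image, Fintype.card_fun, Fintype.card_coe, Fintype.card_fin] at key
  simp only [Set.InjOn, coe_image, Set.mem_image, mem_coe]
  rintro _ ⟨x, hx, rfl⟩ _ ⟨x', hx', rfl⟩ h
  simp only [Prod.mk.injEq, funext_iff] at h
  funext s
  refine entry_eq_of_mem_tupleSet (T := T) hpf hqf hm hx hx' (fun s hs => ?_) (fun s hs => ?_)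
    s ?_
  · exact h.1 ⟨s, by simpa [initSeg] using hs⟩
  · exact h.2 ⟨s, hs⟩
  · simpa [initSeg] using s.2

end Tuples

theorem stmt7_general (n N : ℕ)
    (ε : Fin (2 * n) → Bool) (σ : Fin (2 * n) → Equiv.Perm (Fin N × Fin N))
    (p q : Equiv.Perm (Fin (2 * n)))
    (hpf : ∀ s, p s ≠ s) (hqf : ∀ s, q s ≠ s)
    (m m' : ℕ) (hm : 1 ≤ m) (hmm : m + m' ≤ 2 * n) :
    Fcnt n N ε σ p q (initSeg n (m + m')) *
        N ^ (Set.ncard {B : Set (Fin (2 * n)) | (∃ a, B = {x | joinRel p q a x}) ∧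
          (∃ x ∈ B, m ≤ (x : ℕ)) ∧ ∀ x ∈ B, (x : ℕ) < m + m'}) ≤
      Fcnt n N ε σ p q (initSeg n m) * N ^ m' := by
  rw [ncard_blocks_eq_card_blockMaxesIn]
  calc Fcnt n N ε σ p q (initSeg n (m + m')) * N ^ #(blockMaxesIn p q m (m + m'))
      ≤ Fcnt n N ε σ p q (initSeg n m) * N ^ #(nonMaxesIn p q m (m + m')) *
          N ^ #(blockMaxesIn p q m (m + m')) :=
        Nat.mul_le_mul_right _ (Fcnt_initSeg_le hpf hqf hm (Nat.le_add_right m m'))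
    _ = Fcnt n N ε σ p q (initSeg n m) * N ^ m' := by
        rw [mul_assoc, ← pow_add, add_comm, card_blockMaxesIn_add_card_nonMaxesIn,
          card_window hmm]

/-- `F(m + m') ≤ F(m) ⬝ N^{m' - t}` where `t` is the number of blocks `B` of `p ∨ q` with
`m < max B ≤ m + m'` (stated multiplicatively, as `F(m+m') ⬝ N^t ≤ F(m) ⬝ N^{m'}`). -/
theorem stmt7 (n N : ℕ) (hn : 1 ≤ n) (hN : 1 ≤ N)
    (ε : Fin (2 * n) → Bool) (σ : Fin (2 * n) → Equiv.Perm (Fin N × Fin N))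
    (p q : Equiv.Perm (Fin (2 * n)))
    (hp : Function.Involutive p) (hq : Function.Involutive q)
    (hpf : ∀ s, p s ≠ s) (hqf : ∀ s, q s ≠ s)
    (hpε : ∀ s, ε (p s) ≠ ε s) (hqε : ∀ s, ε (q s) ≠ ε s)
    (m m' : ℕ) (hm : 1 ≤ m) (hm' : 1 ≤ m') (hmm : m + m' ≤ 2 * n) :
    Fcnt n N ε σ p q (initSeg n (m + m')) *
        N ^ (Set.ncard {B : Set (Fin (2 * n)) | (∃ a, B = {x | joinRel p q a x}) ∧
          (∃ x ∈ B, m ≤ (x : ℕ)) ∧ ∀ x ∈ B, (x : ℕ) < m + m'}) ≤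
      Fcnt n N ε σ p q (initSeg n m) * N ^ m' :=
  stmt7_general n N ε σ p q hpf hqf m m' hm hmm
end

section
/- With the data fixed as in the context, suppose there exists t ∈ [2n] such that p(t) < t, q(t) < t, and t is not the largest element of the block of p∨q containing t. Then |A^{(p,q)}| ≤ N^{ 2n − |p∨q| }. (This is the combinatorial core of the fact that, for a block {a_1 < a_2 < … < a_m} of p∨q, unless {p(a_s), q(a_s)} = {a_{s−1}, a_{s+1}} cyclically for every s, the corresponding Weingarten term is O(N^{−1}).) -/
open Filter

/-- `|p ∨ q|`, the number of blocks of the join partition. -/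
noncomputable def numBlocks {m : ℕ} (p q : Equiv.Perm (Fin m)) : ℕ :=
  Set.ncard {B : Set (Fin m) | ∃ a, B = {x | joinRel p q a x}}

lemma rot_val {k : ℕ} (r : Fin k) (h : r.val + 1 < k) :
    (finRotate k r).val = r.val + 1 := by
  cases k with
  | zero => exact r.elim0
  | succ m =>
    rw [finRotate_succ_apply]
    apply Fin.val_add_one_of_lt
    simp only [Fin.lt_def, Fin.val_last]
    omega

/-- If for some `t` both `p t < t` and `q t < t` while `t` is not the largest element of its
block of `p ∨ q`, then `|A^{(p,q)}| ≤ N^{2n - |p∨q|}` (stated multiplicatively). -/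
theorem stmt11 (n N : ℕ) (hn : 1 ≤ n) (hN : 1 ≤ N)
    (ε : Fin (2 * n) → Bool) (σ : Fin (2 * n) → Equiv.Perm (Fin N × Fin N))
    (p q : Equiv.Perm (Fin (2 * n)))
    (hp : Function.Involutive p) (hq : Function.Involutive q)
    (hpf : ∀ s, p s ≠ s) (hqf : ∀ s, q s ≠ s)
    (hpε : ∀ s, ε (p s) ≠ ε s) (hqε : ∀ s, ε (q s) ≠ ε s)
    (t : Fin (2 * n)) (hpt : p t < t) (hqt : q t < t)
    (hmax : ∃ x, joinRel p q t x ∧ t < x) :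
    (tupleSet n N ε σ p q).card * N ^ numBlocks p q ≤ N ^ (2 * n) := by
  classical
  have hm : 0 < 2 * n := by omega
  set L : Fin (2 * n) := ⟨2 * n - 1, by omega⟩ with hL
  -- basic facts about the join relation
  have jr_refl : ∀ a, joinRel p q a a := fun a => Relation.EqvGen.refl a
  have jr_symm : ∀ {a b}, joinRel p q a b → joinRel p q b a :=
    fun h => Relation.EqvGen.symm _ _ h
  have jr_trans : ∀ {a b c}, joinRel p q a b → joinRel p q b c → joinRel p q a c :=
    fun h1 h2 => Relation.EqvGen.trans _ _ _ h1 h2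
  have jr_p : ∀ a, joinRel p q a (p a) := fun a => Relation.EqvGen.rel _ _ (Or.inl rfl)
  have jr_q : ∀ a, joinRel p q a (q a) := fun a => Relation.EqvGen.rel _ _ (Or.inr rfl)
  -- blocks as finsets, and their maxima
  have Bf_ne : ∀ a : Fin (2 * n), (Finset.univ.filter (fun x => joinRel p q a x)).Nonempty :=
    fun a => ⟨a, by simp [jr_refl a]⟩
  set mx : Fin (2 * n) → Fin (2 * n) :=
    fun a => (Finset.univ.filter (fun x => joinRel p q a x)).max' (Bf_ne a) with hmx
  have jr_mx : ∀ a, joinRel p q a (mx a) := by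
    intro a
    have := Finset.max'_mem (Finset.univ.filter (fun x => joinRel p q a x)) (Bf_ne a)
    simp only [Finset.mem_filter, Finset.mem_univ, true_and] at this
    exact this
  have le_mx : ∀ a x, joinRel p q a x → x ≤ mx a := fun a x h =>
    Finset.le_max' _ x (by simp [h])
  have mx_congr : ∀ {a b}, joinRel p q a b → mx a = mx b := fun {a b} hab =>
    le_antisymm (le_mx b _ (jr_trans (jr_symm hab) (jr_mx a)))
      (le_mx a _ (jr_trans hab (jr_mx b)))
  -- block set lemmas
  have block_eq : ∀ a b : Fin (2 * n), joinRel p q a b →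
      {x | joinRel p q a x} = {x | joinRel p q b x} := by
    intro a b hab
    ext z
    simp only [Set.mem_setOf_eq]
    exact ⟨fun h => jr_trans (jr_symm hab) h, fun h => jr_trans hab h⟩
  have block_rel : ∀ a b : Fin (2 * n),
      {x | joinRel p q a x} = {x | joinRel p q b x} → joinRel p q a b := by
    intro a b h
    have hb : b ∈ {x | joinRel p q b x} := jr_refl b
    rw [← h] at hb
    exact hb
  -- the distinguished finset D'
  set D' : Finset (Fin (2 * n)) :=
    (Finset.univ.filter (fun s : Fin (2 * n) => p s < s ∧ q s < s)).erase L with hD'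
  obtain ⟨w, hw1, hw2⟩ := hmax
  have hLtop : ∀ r : Fin (2 * n), r ≤ L := by
    intro r
    rw [hL, Fin.le_def]
    have := r.isLt
    simp
    omega
  have htL : t ≠ L := by
    intro h
    have : w ≤ L := hLtop w
    rw [← h] at this
    exact absurd this (not_le.2 hw2)
  have ht_mem : t ∈ D' :=
    Finset.mem_erase.2 ⟨htL, Finset.mem_filter.2 ⟨Finset.mem_univ t, hpt, hqt⟩⟩
  have t_lt_mx : t < mx t := lt_of_lt_of_le hw2 (le_mx t w hw1)
  have mx_mem : ∀ a, mx a ∈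
      Finset.univ.filter (fun s : Fin (2 * n) => p s < s ∧ q s < s) := by
    intro a
    refine Finset.mem_filter.2 ⟨Finset.mem_univ _, ?_, ?_⟩
    · exact lt_of_le_of_ne (le_mx a _ (jr_trans (jr_mx a) (jr_p (mx a)))) (hpf (mx a))
    · exact lt_of_le_of_ne (le_mx a _ (jr_trans (jr_mx a) (jr_q (mx a)))) (hqf (mx a))
  have mxD' : ∀ a, ¬ joinRel p q a L → mx a ∈ D' := by
    intro a h
    refine Finset.mem_erase.2 ⟨?_, mx_mem a⟩
    intro he
    exact h (he ▸ jr_mx a)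
  -- the function F and its properties
  set F : Fin (2 * n) → Fin (2 * n) :=
    fun a => if joinRel p q a L then t else mx a with hF
  have F_mem : ∀ a, F a ∈ D' := by
    intro a
    by_cases h : joinRel p q a L
    · simp only [hF, if_pos h]; exact ht_mem
    · simp only [hF, if_neg h]; exact mxD' a h
  have F_inj : ∀ a b, F a = F b → joinRel p q a b := by
    intro a b hab
    by_cases ha : joinRel p q a L <;> by_cases hb : joinRel p q b L
    · exact jr_trans ha (jr_symm hb)
    · exfalso
      simp only [hF, if_pos ha, if_neg hb] at hab
      have h1 : joinRel p q b t := hab ▸ jr_mx b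
      have h2 : mx t = mx b := mx_congr (jr_symm h1)
      rw [h2, ← hab] at t_lt_mx
      exact lt_irrefl t t_lt_mx
    · exfalso
      simp only [hF, if_neg ha, if_pos hb] at hab
      have h1 : joinRel p q a t := hab ▸ jr_mx a
      have h2 : mx t = mx a := mx_congr (jr_symm h1)
      rw [h2, hab] at t_lt_mx
      exact lt_irrefl t t_lt_mx
    · simp only [hF, if_neg ha, if_neg hb] at hab
      exact jr_trans (jr_mx a) (by rw [hab]; exact jr_symm (jr_mx b))
  -- numBlocks p q ≤ D'.card
  set f : Set (Fin (2 * n)) → Fin (2 * n) :=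
    fun B => if h : ∃ a, B = {x | joinRel p q a x} then F h.choose else t with hf
  have hle1 : numBlocks p q ≤ D'.card := by
    unfold numBlocks
    rw [← Set.ncard_coe_finset]
    apply Set.ncard_le_ncard_of_injOn f
    · intro B _
      simp only [hf]
      split
      · exact Finset.mem_coe.2 (F_mem _)
      · exact Finset.mem_coe.2 ht_mem
    · rintro B1 ⟨a1, rfl⟩ B2 ⟨a2, rfl⟩ hfe
      simp only [hf] at hfe
      have h1 : ∃ a, {x | joinRel p q a1 x} = {x | joinRel p q a x} := ⟨a1, rfl⟩
      have h2 : ∃ a, {x | joinRel p q a2 x} = {x | joinRel p q a x} := ⟨a2, rfl⟩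
      rw [dif_pos h1, dif_pos h2] at hfe
      have e1 : joinRel p q a1 h1.choose := block_rel _ _ h1.choose_spec
      have e2 : joinRel p q a2 h2.choose := block_rel _ _ h2.choose_spec
      have e3 : joinRel p q h1.choose h2.choose := F_inj _ _ hfe
      exact block_eq _ _ (jr_trans e1 (jr_trans e3 (jr_symm e2)))
  -- the counting part
  set sD : Finset (Fin (2 * n)) := D'.image (finRotate (2 * n)) with hsD
  have hD'val : ∀ u ∈ D', u.val + 1 < 2 * n := by
    intro u hu
    have h1 := (Finset.mem_erase.1 hu).1
    rcases Nat.lt_or_ge (u.val + 1) (2 * n) with h | h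
    · exact h
    · exfalso
      apply h1
      rw [hL]
      apply Fin.ext
      have := u.isLt
      simp
      omega
  set Fc : Finset (Fin (2 * n)) := sDᶜ with hFc
  have hcount : (tupleSet n N ε σ p q).card ≤ N ^ Fc.card := by
    have hmain := Finset.card_le_card_of_injOn
      (s := tupleSet n N ε σ p q)
      (f := fun x : (Fin (2 * n) → Fin N) × (Fin (2 * n) → Fin N) =>
        fun a : {a // a ∈ Fc} => x.1 a.1)
      (t := (Finset.univ : Finset ({a // a ∈ Fc} → Fin N)))
      (fun _ _ => Finset.mem_univ _)
      ?_
    · rwa [Finset.card_univ, Fintype.card_fun, Fintype.card_coe, Fintype.card_fin] at hmain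
    · intro x hx y hy hxy
      rw [Finset.mem_coe] at hx hy
      simp only [tupleSet, Finset.mem_filter, Finset.mem_univ, true_and] at hx hy
      obtain ⟨hcx, hkx, hlx⟩ := hx
      obtain ⟨hcy, hky, hly⟩ := hy
      have main : ∀ v : ℕ, (hv : v < 2 * n) → x.1 ⟨v, hv⟩ = y.1 ⟨v, hv⟩ := by
        intro v
        induction v using Nat.strong_induction_on with
        | _ v ih =>
          intro hv
          have IH : ∀ r : Fin (2 * n), r.val < v → x.1 r = y.1 r := by
            intro r hr
            exact ih r.val hr r.isLt
          by_cases hs : (⟨v, hv⟩ : Fin (2 * n)) ∈ sD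
          · obtain ⟨u, hu, hequ⟩ := Finset.mem_image.1 hs
            have huv : u.val + 1 < 2 * n := hD'val u hu
            have hval : u.val + 1 = v := by
              have h := rot_val u huv
              rw [hequ] at h
              exact h.symm
            have hu' := (Finset.mem_erase.1 hu).2
            have hpu := (Finset.mem_filter.1 hu').2
            have hstep : ∀ r : Fin (2 * n), r < u → klMap ε σ x r = klMap ε σ y r := by
              intro r hru
              have hruv : r.val < u.val := hru
              have hrot : (finRotate (2 * n) r).val = r.val + 1 := rot_val r (by omega)
              have e1 : x.1 r = y.1 r := IH r (by omega)
              have e2 : x.1 (finRotate (2 * n) r) = y.1 (finRotate (2 * n) r) :=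
                IH _ (by rw [hrot]; omega)
              simp only [klMap, hcx r, hcy r, e1, e2]
            have hklp := hstep (p u) hpu.1
            have hklq := hstep (q u) hpu.2
            have hKL : klMap ε σ x u = klMap ε σ y u := by
              apply Prod.ext
              · rw [hkx u, hky u, hklp]
              · rw [hlx u, hly u, hklq]
            have hpair : x.2 u = y.2 u := by
              by_cases hε : ε u
              · simp only [klMap, hε, if_true] at hKL
                have h2 := (σ u).injective hKL
                exact congrArg Prod.snd h2
              · simp only [klMap, hε, if_false, Bool.false_eq_true] at hKL
                have h2 := (σ u).injective hKL
                exact congrArg Prod.fst h2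
            rw [← hequ, ← hcx u, ← hcy u]
            exact hpair
          · have hsc : (⟨v, hv⟩ : Fin (2 * n)) ∈ Fc := Finset.mem_compl.2 hs
            exact congrFun hxy ⟨⟨v, hv⟩, hsc⟩
      have h1 : x.1 = y.1 := funext fun r => main r.val r.isLt
      have h2 : x.2 = y.2 := funext fun s => by rw [hcx s, hcy s, h1]
      exact Prod.ext h1 h2
  -- arithmetic conclusion
  have hdcard : sD.card = D'.card :=
    Finset.card_image_of_injective _ (finRotate (2 * n)).injective
  have hFcc : Fc.card = 2 * n - D'.card := by
    rw [hFc, Finset.card_compl, hdcard]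
    simp
  have hd2n : D'.card ≤ 2 * n := by
    have := Finset.card_le_univ D'
    simpa using this
  calc (tupleSet n N ε σ p q).card * N ^ numBlocks p q
      ≤ N ^ (2 * n - D'.card) * N ^ D'.card := by
        apply Nat.mul_le_mul
        · rw [← hFcc]; exact hcount
        · exact Nat.pow_le_pow_right hN hle1
    _ = N ^ (2 * n) := by rw [← pow_add]; congr 1; omega
end

section
/- For all positive integers b, d, the partial transpose satisfies Y_{bd}(Γ_{b,d}, Γ_{b,d}) ≤ 2(b²d³ + b³d²). Consequently, if (b_N)_N and (d_N)_N are non-decreasing sequences of positive integers with b_N → ∞ and d_N → ∞, then Y_{b_N d_N}(Γ_{b_N,d_N}, Γ_{b_N,d_N}) / (b_N d_N)³ → 0 as N → ∞; i.e. the sequence (Γ_{b_N,d_N})_N of permutations of [b_N d_N]×[b_N d_N] satisfies condition (C). -/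
open Filter

/-- Transposition of the inner (block) indices: `((α1,β1),(α2,β2)) ↦ ((α1,β2),(α2,β1))`. -/
def blockSwap (b d : ℕ) : Equiv.Perm ((Fin b × Fin d) × (Fin b × Fin d)) where
  toFun x := ((x.1.1, x.2.2), (x.2.1, x.1.2))
  invFun x := ((x.1.1, x.2.2), (x.2.1, x.1.2))
  left_inv _ := rfl
  right_inv _ := rfl

/-- The `(b,d)`-partial transpose `Γ_{b,d}`, a permutation of `[bd] × [bd]`, via the
identification `Fin b × Fin d ≃ Fin (b*d)`, `(α,β) ↦ α·d + β` (the `0`-based version of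
`(α-1)d + β`). -/
def ptrans (b d : ℕ) : Equiv.Perm (Fin (b * d) × Fin (b * d)) :=
  ((Equiv.prodCongr finProdFinEquiv.symm finProdFinEquiv.symm).trans (blockSwap b d)).trans
    (Equiv.prodCongr finProdFinEquiv finProdFinEquiv)

lemma cardA {M : ℕ} {γ δ : Type*} [Fintype γ] [Fintype δ] [DecidableEq δ]
    (e : Fin M ≃ γ × δ) :
    (Finset.univ.filter fun x : Fin M × Fin M × Fin M =>
      (e x.2.1).2 = (e x.2.2).2).card ≤ M * M * Fintype.card γ := by
  calc (Finset.univ.filter fun x : Fin M × Fin M × Fin M =>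
      (e x.2.1).2 = (e x.2.2).2).card
      ≤ (Finset.univ : Finset (Fin M × Fin M × γ)).card := by
        apply Finset.card_le_card_of_injOn
          (fun x : Fin M × Fin M × Fin M => (x.1, x.2.1, (e x.2.2).1))
          (fun _ _ => Finset.mem_univ _)
        intro x hx y hy hxy
        simp only [Finset.mem_coe, Finset.mem_filter] at hx hy
        have h1 : x.1 = y.1 := congrArg (fun p => p.1) hxy
        have h2 : x.2.1 = y.2.1 := congrArg (fun p => p.2.1) hxy
        have h3 : (e x.2.2).1 = (e y.2.2).1 := congrArg (fun p => p.2.2) hxy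
        have h4 : (e x.2.2).2 = (e y.2.2).2 := by rw [← hx.2, ← hy.2, h2]
        have h5 : x.2.2 = y.2.2 := e.injective (Prod.ext h3 h4)
        exact Prod.ext h1 (Prod.ext h2 h5)
    _ = M * M * Fintype.card γ := by simp [mul_assoc]

lemma cardC {M : ℕ} {γ δ : Type*} [Fintype γ] [Fintype δ] [DecidableEq γ]
    (e : Fin M ≃ γ × δ) :
    (Finset.univ.filter fun x : Fin M × Fin M × Fin M =>
      (e x.1).1 = (e x.2.2).1).card ≤ M * M * Fintype.card δ := by
  calc (Finset.univ.filter fun x : Fin M × Fin M × Fin M =>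
      (e x.1).1 = (e x.2.2).1).card
      ≤ (Finset.univ : Finset (Fin M × Fin M × δ)).card := by
        apply Finset.card_le_card_of_injOn
          (fun x : Fin M × Fin M × Fin M => (x.1, x.2.1, (e x.2.2).2))
          (fun _ _ => Finset.mem_univ _)
        intro x hx y hy hxy
        simp only [Finset.mem_coe, Finset.mem_filter] at hx hy
        have h1 : x.1 = y.1 := congrArg (fun p => p.1) hxy
        have h2 : x.2.1 = y.2.1 := congrArg (fun p => p.2.1) hxy
        have h4 : (e x.2.2).2 = (e y.2.2).2 := congrArg (fun p => p.2.2) hxy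
        have h3 : (e x.2.2).1 = (e y.2.2).1 := by rw [← hx.2, ← hy.2, h1]
        have h5 : x.2.2 = y.2.2 := e.injective (Prod.ext h3 h4)
        exact Prod.ext h1 (Prod.ext h2 h5)
    _ = M * M * Fintype.card δ := by simp [mul_assoc]

lemma ptrans_bound (b d : ℕ) :
    Ycnt (b * d) (ptrans b d) (ptrans b d) ≤ 2 * (b ^ 2 * d ^ 3 + b ^ 3 * d ^ 2) := by
  set M := b * d with hM
  set E : Fin (b * d) ≃ Fin b × Fin d := finProdFinEquiv.symm with hE
  set E' : Fin (b * d) ≃ Fin d × Fin b :=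
    finProdFinEquiv.symm.trans (Equiv.prodComm (Fin b) (Fin d)) with hE'
  have hS1 : (Finset.univ.filter fun x : Fin M × Fin M × Fin M =>
      (ptrans b d (x.1, x.2.1)).1 = (ptrans b d (x.1, x.2.2)).1 ∨
      (ptrans b d (x.1, x.2.1)).1 = (ptrans b d (x.2.2, x.2.1)).1) =
      Finset.univ.filter fun x : Fin M × Fin M × Fin M =>
        (E x.2.1).2 = (E x.2.2).2 ∨ (E x.1).1 = (E x.2.2).1 := by
    apply Finset.filter_congr
    intro x _
    show (finProdFinEquiv ((E x.1).1, (E x.2.1).2) =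
          finProdFinEquiv ((E x.1).1, (E x.2.2).2) ∨
          finProdFinEquiv ((E x.1).1, (E x.2.1).2) =
          finProdFinEquiv ((E x.2.2).1, (E x.2.1).2)) ↔ _
    simp [Prod.ext_iff]
  have hS2 : (Finset.univ.filter fun x : Fin M × Fin M × Fin M =>
      (ptrans b d (x.1, x.2.1)).2 = (ptrans b d (x.1, x.2.2)).2 ∨
      (ptrans b d (x.1, x.2.1)).2 = (ptrans b d (x.2.2, x.2.1)).2) =
      Finset.univ.filter fun x : Fin M × Fin M × Fin M =>
        (E' x.2.1).2 = (E' x.2.2).2 ∨ (E' x.1).1 = (E' x.2.2).1 := by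
    apply Finset.filter_congr
    intro x _
    show (finProdFinEquiv ((E x.2.1).1, (E x.1).2) =
          finProdFinEquiv ((E x.2.2).1, (E x.1).2) ∨
          finProdFinEquiv ((E x.2.1).1, (E x.1).2) =
          finProdFinEquiv ((E x.2.1).1, (E x.2.2).2)) ↔ _
    simp [hE, hE', Prod.ext_iff]
  have key : Ycnt M (ptrans b d) (ptrans b d) ≤
      (M * M * b + M * M * d) + (M * M * d + M * M * b) := by
    unfold Ycnt
    rw [hS1, hS2]
    gcongr ?_ + ?_
    · calc (Finset.univ.filter fun x : Fin M × Fin M × Fin M =>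
          (E x.2.1).2 = (E x.2.2).2 ∨ (E x.1).1 = (E x.2.2).1).card
          ≤ (Finset.univ.filter fun x : Fin M × Fin M × Fin M =>
              (E x.2.1).2 = (E x.2.2).2).card +
            (Finset.univ.filter fun x : Fin M × Fin M × Fin M =>
              (E x.1).1 = (E x.2.2).1).card := by
            rw [Finset.filter_or]; exact Finset.card_union_le _ _
        _ ≤ M * M * b + M * M * d := by
            have := cardA E
            have := cardC E
            simpa using add_le_add (by simpa using cardA E) (by simpa using cardC E)
    · calc (Finset.univ.filter fun x : Fin M × Fin M × Fin M =>
          (E' x.2.1).2 = (E' x.2.2).2 ∨ (E' x.1).1 = (E' x.2.2).1).card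
          ≤ (Finset.univ.filter fun x : Fin M × Fin M × Fin M =>
              (E' x.2.1).2 = (E' x.2.2).2).card +
            (Finset.univ.filter fun x : Fin M × Fin M × Fin M =>
              (E' x.1).1 = (E' x.2.2).1).card := by
            rw [Finset.filter_or]; exact Finset.card_union_le _ _
        _ ≤ M * M * d + M * M * b :=
            add_le_add (by simpa using cardA E') (by simpa using cardC E')
  calc Ycnt M (ptrans b d) (ptrans b d)
      ≤ (M * M * b + M * M * d) + (M * M * d + M * M * b) := key
    _ = 2 * (b ^ 2 * d ^ 3 + b ^ 3 * d ^ 2) := by rw [hM]; ring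

theorem stmt12 :
    (∀ b d : ℕ, 0 < b → 0 < d →
      Ycnt (b * d) (ptrans b d) (ptrans b d) ≤ 2 * (b ^ 2 * d ^ 3 + b ^ 3 * d ^ 2)) ∧
    (∀ bs ds : ℕ → ℕ, Monotone bs → Monotone ds → (∀ N, 0 < bs N) → (∀ N, 0 < ds N) →
      Tendsto bs atTop atTop → Tendsto ds atTop atTop →
      Tendsto (fun N : ℕ =>
          (Ycnt (bs N * ds N) (ptrans (bs N) (ds N)) (ptrans (bs N) (ds N)) : ℝ) /
            ((bs N : ℝ) * (ds N : ℝ)) ^ 3) atTop (nhds 0)) := by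
  constructor
  · exact fun b d _ _ => ptrans_bound b d
  · intro bs ds _ _ hbp hdp hb hd
    have hle : ∀ N : ℕ,
        (Ycnt (bs N * ds N) (ptrans (bs N) (ds N)) (ptrans (bs N) (ds N)) : ℝ) /
          ((bs N : ℝ) * (ds N : ℝ)) ^ 3 ≤ 2 / (bs N : ℝ) + 2 / (ds N : ℝ) := by
      intro N
      set b := bs N
      set d := ds N
      have hb0 : (0:ℝ) < (b:ℝ) := by exact_mod_cast hbp N
      have hd0 : (0:ℝ) < (d:ℝ) := by exact_mod_cast hdp N
      have hnum : (Ycnt (b * d) (ptrans b d) (ptrans b d) : ℝ) ≤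
          2 * ((b:ℝ) ^ 2 * (d:ℝ) ^ 3 + (b:ℝ) ^ 3 * (d:ℝ) ^ 2) := by
        exact_mod_cast ptrans_bound b d
      have hpos : (0:ℝ) < ((b:ℝ) * (d:ℝ)) ^ 3 := by positivity
      rw [div_le_iff₀ hpos]
      calc (Ycnt (b * d) (ptrans b d) (ptrans b d) : ℝ)
          ≤ 2 * ((b:ℝ) ^ 2 * (d:ℝ) ^ 3 + (b:ℝ) ^ 3 * (d:ℝ) ^ 2) := hnum
        _ = (2 / (b:ℝ) + 2 / (d:ℝ)) * ((b:ℝ) * (d:ℝ)) ^ 3 := by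
            field_simp
    have hnonneg : ∀ N : ℕ, (0:ℝ) ≤
        (Ycnt (bs N * ds N) (ptrans (bs N) (ds N)) (ptrans (bs N) (ds N)) : ℝ) /
          ((bs N : ℝ) * (ds N : ℝ)) ^ 3 := by
      intro N; positivity
    have hbR : Tendsto (fun N => (bs N : ℝ)) atTop atTop :=
      tendsto_natCast_atTop_atTop.comp hb
    have hdR : Tendsto (fun N => (ds N : ℝ)) atTop atTop :=
      tendsto_natCast_atTop_atTop.comp hd
    have hlim : Tendsto (fun N : ℕ => 2 / (bs N : ℝ) + 2 / (ds N : ℝ)) atTop (nhds 0) := by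
      have h1 : Tendsto (fun N : ℕ => 2 / (bs N : ℝ)) atTop (nhds 0) :=
        tendsto_const_nhds.div_atTop hbR
      have h2 : Tendsto (fun N : ℕ => 2 / (ds N : ℝ)) atTop (nhds 0) :=
        tendsto_const_nhds.div_atTop hdR
      simpa using h1.add h2
    exact squeeze_zero hnonneg hle hlim
end

section
/- Let (𝔖_N)_{N≥1} be a sequence of independent random permutations, with 𝔖_N uniformly distributed on the symmetric group of [N]×[N] (i.e. on the probability space ∏_{N≥1} S([N]²) with the product of uniform measures). Then Y_N(𝔖_N, 𝔖_N)/N³ → 0 almost surely as N → ∞; i.e. almost every realization of (𝔖_N)_N satisfies condition (C). -/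
/-!
Bound `Y_N(σ, σ)` by `Z₁(σ) + Z₂(σ)`, where `Zᵢ(σ)` counts the `2N³` pairs of cells
`((i,j),(i,k))`, `((i,j),(k,j))` whose images under `σ` agree in the `i`-th coordinate. For a
uniform `σ`, a pair of distinct cells collides with probability `O(1/N)`, and two disjoint pairs
of distinct cells collide simultaneously with probability `O(1/N²)`. Only `O(N²)` pairs are
degenerate and each pair meets only `O(N)` others, so `𝔼[Zᵢ²] = O(N⁴)`. Chebyshev's inequality
gives `P(Y_N ≥ ε N³) = O(1/(ε² N²))`, which is summable, and Borel–Cantelli concludes.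
-/

open MeasureTheory Filter

instance permMS (N : ℕ) : MeasurableSpace (Equiv.Perm (Fin N × Fin N)) := ⊤

open Finset Function Equiv
open scoped Nat ENNReal Topology

theorem card_filter_or_le {ι : Type*} [DecidableEq ι] (s : Finset ι) (p q : ι → Prop)
    [DecidablePred p] [DecidablePred q] :
    #(s.filter fun i => p i ∨ q i) ≤ #(s.filter p) + #(s.filter q) := by
  rw [filter_or]
  exact card_union_le _ _

theorem card_filter_prod_le {κ ι : Type*} [Fintype κ] [Fintype ι] {P : κ → ι → Prop}
    [∀ k i, Decidable (P k i)] {K : ℕ} (h : ∀ k, #{i | P k i} ≤ K) :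
    #{q : κ × ι | P q.1 q.2} ≤ Fintype.card κ * K := by
  calc #{q : κ × ι | P q.1 q.2} = ∑ k, #{i | P k i} := by
        simp only [card_filter, Fintype.sum_prod_type]
    _ ≤ ∑ _k : κ, K := sum_le_sum fun k _ => h k
    _ = Fintype.card κ * K := by rw [sum_const, card_univ, smul_eq_mul]

theorem sum_card_filter_sq {X Y : Type*} [Fintype X] [Fintype Y] (E : Y → X → Prop)
    [∀ y x, Decidable (E y x)] :
    ∑ x, #{y | E y x} ^ 2 = ∑ q : Y × Y, #{x | E q.1 x ∧ E q.2 x} := by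
  have hsq : ∀ x, #{y | E y x} ^ 2 = #{q : Y × Y | E q.1 x ∧ E q.2 x} := fun x => by
    rw [sq, ← card_product, ← filter_product, univ_product_univ]
  simp_rw [hsq, card_filter]
  exact sum_comm

theorem card_filter_le_sum_sq_div {ι : Type*} (s : Finset ι) (f : ι → ℝ) {ε : ℝ} (hε : 0 < ε) :
    (#{x ∈ s | ε ≤ |f x|} : ℝ) ≤ (∑ x ∈ s, f x ^ 2) / ε ^ 2 := by
  rw [le_div_iff₀ (by positivity)]
  calc (#{x ∈ s | ε ≤ |f x|} : ℝ) * ε ^ 2 = ∑ x ∈ s with ε ≤ |f x|, ε ^ 2 := by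
        rw [sum_const, nsmul_eq_mul]
    _ ≤ ∑ x ∈ s with ε ≤ |f x|, f x ^ 2 := sum_le_sum fun x hx => by
        rw [← sq_abs (f x)]
        exact pow_le_pow_left₀ hε.le (mem_filter.1 hx).2 2
    _ ≤ ∑ x ∈ s, f x ^ 2 :=
        sum_le_sum_of_subset_of_nonneg (filter_subset _ _) fun _ _ _ => sq_nonneg _

theorem Nat.pow_mul_factorial_sub_le {n k : ℕ} (h : 2 * k ≤ n) :
    n ^ k * (n - k)! ≤ 2 ^ k * n ! := by
  calc n ^ k * (n - k)! ≤ (2 * (n + 1 - k)) ^ k * (n - k)! := by gcongr; omega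
    _ = 2 ^ k * ((n + 1 - k) ^ k * (n - k)!) := by ring
    _ ≤ 2 ^ k * (n.descFactorial k * (n - k)!) := by gcongr; exact n.pow_sub_le_descFactorial k
    _ = 2 ^ k * n ! := by
        rw [mul_comm (n.descFactorial k), Nat.factorial_mul_descFactorial (by omega)]

theorem card_filter_apply_eq_apply_le {α β : Type*} [Fintype α] [DecidableEq β] {g : α → β}
    {N : ℕ} (hg : ∀ r, #{x | g x = r} ≤ N) :
    #{p : α × α | g p.1 = g p.2} ≤ Fintype.card α * N := by
  calc #{p : α × α | g p.1 = g p.2} = ∑ x, #{y | g y = g x} := by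
        simp only [card_filter, Fintype.sum_prod_type, eq_comm]
    _ ≤ ∑ _x : α, N := sum_le_sum fun x _ => hg (g x)
    _ = Fintype.card α * N := by rw [sum_const, card_univ, smul_eq_mul]

def collisionCount {α β κ : Type*} [Fintype κ] [DecidableEq β] (g : α → β) (c : κ → α × α)
    (σ : Perm α) : ℕ :=
  #{k | g (σ (c k).1) = g (σ (c k).2)}

section Collisions
variable {α : Type*} [Fintype α] [DecidableEq α]

theorem card_filter_perm_apply_eq_le {ι : Type*} [Fintype ι] {e : ι → α} (he : Injective e)
    (f : ι → α) :
    #{σ : Perm α | ∀ i, σ (e i) = f i} ≤ (Fintype.card α - Fintype.card ι)! := by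
  classical
  obtain hempty | ⟨σ₀, hσ₀⟩ :=
    (univ.filter fun σ : Perm α => ∀ i, σ (e i) = f i).eq_empty_or_nonempty
  · simp [hempty]
  rw [mem_filter] at hσ₀
  -- every such `σ` is `σ₀` composed with a permutation supported off the range of `e`
  have hsub : ({σ : Perm α | ∀ i, σ (e i) = f i} : Finset (Perm α)) ⊆
      univ.image fun τ : Perm {x // x ∉ Set.range e} => σ₀ * Perm.ofSubtype τ := by
    intro σ hσ
    rw [mem_filter] at hσ
    have hfix : ∀ i, (σ₀⁻¹ * σ) (e i) = e i := fun i => by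
      rw [Perm.mul_apply, hσ.2, ← hσ₀.2, Perm.inv_eq_iff_eq]
    have hp : ∀ x, (σ₀⁻¹ * σ) x ∉ Set.range e ↔ x ∉ Set.range e := by
      intro x
      constructor
      · rintro hx ⟨i, rfl⟩
        exact hx ⟨i, (hfix i).symm⟩
      · rintro hx ⟨i, hi⟩
        exact hx ⟨i, (σ₀⁻¹ * σ).injective ((hfix i).trans hi)⟩
    refine mem_image.2 ⟨(σ₀⁻¹ * σ).subtypePerm hp, mem_univ _, ?_⟩
    rw [Perm.ofSubtype_subtypePerm hp, mul_inv_cancel_left]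
    rintro x hx ⟨i, rfl⟩
    exact hx (hfix i)
  calc #{σ : Perm α | ∀ i, σ (e i) = f i} ≤ Fintype.card (Perm {x // x ∉ Set.range e}) :=
        (card_le_card hsub).trans card_image_le
    _ = (Fintype.card α - Fintype.card ι)! := by
        rw [Fintype.card_perm, Fintype.card_subtype_compl, Set.card_range_of_injective he]

variable {β : Type*} [DecidableEq β] {g : α → β} {N : ℕ}

theorem card_filter_perm_forall_apply_eq_le {ι : Type*} [Fintype ι] {a b : ι → α}
    (hab : Injective (Sum.elim a b)) (hg : ∀ r, #{x | g x = r} ≤ N) :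
    #{σ : Perm α | ∀ i, g (σ (a i)) = g (σ (b i))} ≤
      (Fintype.card α * N) ^ Fintype.card ι * (Fintype.card α - 2 * Fintype.card ι)! := by
  classical
  set V : Finset (α × α) := {p | g p.1 = g p.2}
  have hsub : ({σ : Perm α | ∀ i, g (σ (a i)) = g (σ (b i))} : Finset (Perm α)) ⊆
      (Fintype.piFinset fun _ : ι => V).biUnion fun F =>
        {σ : Perm α | ∀ x, σ (Sum.elim a b x) = Sum.elim (Prod.fst ∘ F) (Prod.snd ∘ F) x} := by
    intro σ hσ
    simp only [mem_filter, mem_univ, true_and] at hσ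
    simp only [mem_biUnion, Fintype.mem_piFinset, mem_filter, mem_univ, true_and, Sum.forall,
      Sum.elim_inl, Sum.elim_inr, V]
    exact ⟨fun i => (σ (a i), σ (b i)), hσ, fun _ => rfl, fun _ => rfl⟩
  calc _ ≤ _ := card_le_card hsub
    _ ≤ #(Fintype.piFinset fun _ : ι => V) * (Fintype.card α - Fintype.card (ι ⊕ ι))! :=
        card_biUnion_le_card_mul _ _ _ fun F _ => card_filter_perm_apply_eq_le hab _
    _ ≤ _ := by
        rw [Fintype.card_piFinset, prod_const, card_univ, Fintype.card_sum, two_mul]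
        gcongr
        exact card_filter_apply_eq_apply_le hg

theorem card_filter_perm_apply_eq_apply_le (hg : ∀ r, #{x | g x = r} ≤ N) {a b : α}
    (hab : a ≠ b) :
    #{σ : Perm α | g (σ a) = g (σ b)} ≤
      Fintype.card α * N * (Fintype.card α - 2)! := by
  have h := card_filter_perm_forall_apply_eq_le (ι := Unit) (a := fun _ => a) (b := fun _ => b)
    (injective_of_subsingleton _ |>.sumElim (injective_of_subsingleton _) fun _ _ => hab) hg
  simpa using h

theorem card_filter_perm_apply_eq_apply_and_le (hg : ∀ r, #{x | g x = r} ≤ N) {a b a' b' : α}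
    (hab : a ≠ b) (ha'b' : a' ≠ b') (haa' : a ≠ a') (hab' : a ≠ b') (hba' : b ≠ a')
    (hbb' : b ≠ b') :
    #{σ : Perm α | g (σ a) = g (σ b) ∧ g (σ a') = g (σ b')} ≤
      (Fintype.card α * N) ^ 2 * (Fintype.card α - 4)! := by
  have hinj :
      Injective (Sum.elim (fun i => bif i then a' else a) fun i => bif i then b' else b) := by
    refine Injective.sumElim ?_ ?_ ?_ <;> rintro (_ | _) (_ | _) <;> simp [*, Ne.symm]
  have h := card_filter_perm_forall_apply_eq_le hinj hg
  simpa [and_comm] using h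

variable {κ : Type*} (c : κ → α × α)

-- The three terms cover two degenerate pairs, pairs sharing a cell (where one nondegenerate
-- collision suffices), and four distinct cells (two collisions).
theorem card_filter_perm_collide_and_collide_le (hg : ∀ r, #{x | g x = r} ≤ N) (k l : κ) :
    #{σ : Perm α | g (σ (c k).1) = g (σ (c k).2) ∧ g (σ (c l).1) = g (σ (c l).2)} ≤
      (if (c k).1 = (c k).2 ∧ (c l).1 = (c l).2 then (Fintype.card α)! else 0) +
      (if (c k).1 = (c k).2 ∨ (c l).1 = (c l).2 ∨ ((c k).1 = (c l).1 ∨ (c k).1 = (c l).2) ∨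
          ((c k).2 = (c l).1 ∨ (c k).2 = (c l).2)
        then Fintype.card α * N * (Fintype.card α - 2)! else 0) +
      (Fintype.card α * N) ^ 2 * (Fintype.card α - 4)! := by
  by_cases hdeg : (c k).1 = (c k).2 ∧ (c l).1 = (c l).2
  · rw [if_pos hdeg, ← Fintype.card_perm]
    exact (card_le_univ _).trans (by omega)
  rw [if_neg hdeg]
  split_ifs with htouch
  · have hone : #{σ : Perm α | g (σ (c k).1) = g (σ (c k).2) ∧ g (σ (c l).1) = g (σ (c l).2)} ≤
        Fintype.card α * N * (Fintype.card α - 2)! := by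
      rcases not_and_or.1 hdeg with hk | hl
      · exact (card_le_card (monotone_filter_right _ fun _ _ => And.left)).trans
          (card_filter_perm_apply_eq_apply_le hg hk)
      · exact (card_le_card (monotone_filter_right _ fun _ _ => And.right)).trans
          (card_filter_perm_apply_eq_apply_le hg hl)
    omega
  · push Not at htouch
    obtain ⟨hk, hl, ⟨h11, h12⟩, h21, h22⟩ := htouch
    exact (card_filter_perm_apply_eq_apply_and_le hg hk hl h11 h12 h21 h22).trans (by omega)

variable [Fintype κ]

theorem sum_collisionCount_sq_le (hg : ∀ r, #{x | g x = r} ≤ N) {D K : ℕ}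
    (hD : #{k | (c k).1 = (c k).2} ≤ D) (hK : ∀ a, #{k | a = (c k).1 ∨ a = (c k).2} ≤ K) :
    ∑ σ, collisionCount g c σ ^ 2 ≤
      D ^ 2 * (Fintype.card α)! +
      2 * (D + K) * Fintype.card κ * (Fintype.card α * N * (Fintype.card α - 2)!) +
      Fintype.card κ ^ 2 * ((Fintype.card α * N) ^ 2 * (Fintype.card α - 4)!) := by
  have hdeg : #{q : κ × κ | (c q.1).1 = (c q.1).2 ∧ (c q.2).1 = (c q.2).2} ≤ D ^ 2 := by
    rw [← univ_product_univ, filter_product (p := fun k => (c k).1 = (c k).2)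
      (q := fun k => (c k).1 = (c k).2), card_product, sq]
    exact Nat.mul_le_mul hD hD
  have htouch : #{q : κ × κ | (c q.1).1 = (c q.1).2 ∨ (c q.2).1 = (c q.2).2 ∨
      ((c q.1).1 = (c q.2).1 ∨ (c q.1).1 = (c q.2).2) ∨
      ((c q.1).2 = (c q.2).1 ∨ (c q.1).2 = (c q.2).2)} ≤ 2 * (D + K) * Fintype.card κ := by
    have h1 : #{q : κ × κ | (c q.1).1 = (c q.1).2} ≤ D * Fintype.card κ := by
      rw [← univ_product_univ, filter_product_left (p := fun k => (c k).1 = (c k).2), card_product,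
        card_univ]
      exact Nat.mul_le_mul_right _ hD
    have h2 : #{q : κ × κ | (c q.2).1 = (c q.2).2} ≤ Fintype.card κ * D := by
      rw [← univ_product_univ, filter_product_right (q := fun k => (c k).1 = (c k).2),
        card_product, card_univ]
      exact Nat.mul_le_mul_left _ hD
    have h3 := card_filter_prod_le (P := fun k l => (c k).1 = (c l).1 ∨ (c k).1 = (c l).2)
      fun k => hK (c k).1
    have h4 := card_filter_prod_le (P := fun k l => (c k).2 = (c l).1 ∨ (c k).2 = (c l).2)
      fun k => hK (c k).2
    classical
    grw [card_filter_or_le, card_filter_or_le, card_filter_or_le, h1, h2, h3, h4]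
    ring_nf
    omega
  simp only [collisionCount]
  rw [sum_card_filter_sq fun k (σ : Perm α) => g (σ (c k).1) = g (σ (c k).2)]
  refine (sum_le_sum fun q _ => card_filter_perm_collide_and_collide_le c hg q.1 q.2).trans ?_
  rw [sum_add_distrib, sum_add_distrib, ← sum_filter, ← sum_filter, sum_const, sum_const,
    sum_const, card_univ, Fintype.card_prod, smul_eq_mul, smul_eq_mul, smul_eq_mul, ← sq]
  gcongr

end Collisions

section Triangles
variable {N : ℕ}

/-- The pairs of cells `((i,j),(i,k))` (for `false`) and `((i,j),(k,j))` (for `true`) compared in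
`Ycnt`. -/
def trianglePairs (N : ℕ) (k : Bool × Fin N × Fin N × Fin N) : (Fin N × Fin N) × (Fin N × Fin N) :=
  ((k.2.1, k.2.2.1), bif k.1 then (k.2.2.2, k.2.2.1) else (k.2.1, k.2.2.2))

theorem collisionCount_trianglePairs {β : Type*} [DecidableEq β] (g : Fin N × Fin N → β)
    (σ : Perm (Fin N × Fin N)) :
    collisionCount g (trianglePairs N) σ =
      #{x : Fin N × Fin N × Fin N | g (σ (x.1, x.2.1)) = g (σ (x.1, x.2.2))} +
      #{x : Fin N × Fin N × Fin N | g (σ (x.1, x.2.1)) = g (σ (x.2.2, x.2.1))} := by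
  rw [collisionCount, card_filter, Fintype.sum_prod_type, Fintype.sum_bool, card_filter,
    card_filter, add_comm]
  rfl

theorem Ycnt_le_collisionCount (σ : Perm (Fin N × Fin N)) :
    Ycnt N σ σ ≤ collisionCount Prod.fst (trianglePairs N) σ +
      collisionCount Prod.snd (trianglePairs N) σ := by
  rw [Ycnt, collisionCount_trianglePairs, collisionCount_trianglePairs]
  exact add_le_add (card_filter_or_le _ _ _) (card_filter_or_le _ _ _)

theorem card_filter_trianglePairs_fst_eq_snd :
    #{k | (trianglePairs N k).1 = (trianglePairs N k).2} = 2 * N ^ 2 := by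
  simp [card_filter, -sum_boole, Fintype.sum_prod_type, trianglePairs, Prod.ext_iff, sq, two_mul]

theorem card_filter_mem_trianglePairs_le (a : Fin N × Fin N) :
    #{k | a = (trianglePairs N k).1 ∨ a = (trianglePairs N k).2} ≤ 4 * N := by
  have h1 : #{k | a = (trianglePairs N k).1} = 2 * N := by
    simp [card_filter, -sum_boole, Fintype.sum_prod_type, trianglePairs, Prod.ext_iff, ite_and,
      sum_comm (γ := Fin N), two_mul]
  have h2 : #{k | a = (trianglePairs N k).2} = 2 * N := by
    simp [card_filter, -sum_boole, Fintype.sum_prod_type, trianglePairs, Prod.ext_iff, ite_and,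
      two_mul]
  grw [card_filter_or_le, h1, h2]
  omega

theorem sum_collisionCount_trianglePairs_sq_le (hN : 3 ≤ N) {g : Fin N × Fin N → Fin N}
    (hg : ∀ r, #{x | g x = r} ≤ N) :
    ∑ σ, collisionCount g (trianglePairs N) σ ^ 2 ≤ 132 * N ^ 4 * (N ^ 2)! := by
  have h := sum_collisionCount_sq_le (trianglePairs N) hg card_filter_trianglePairs_fst_eq_snd.le
    card_filter_mem_trianglePairs_le
  have h2 := Nat.pow_mul_factorial_sub_le (n := N ^ 2) (k := 2) (by nlinarith)
  have h4 := Nat.pow_mul_factorial_sub_le (n := N ^ 2) (k := 4) (by nlinarith)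
  have hα : Fintype.card (Fin N × Fin N) = N ^ 2 := by simp [sq]
  have hκ : Fintype.card (Bool × Fin N × Fin N × Fin N) = 2 * N ^ 3 := by
    simp only [Fintype.card_prod, Fintype.card_bool, Fintype.card_fin]
    ring
  have hK : 2 * N ^ 2 + 4 * N ≤ 4 * N ^ 2 := by nlinarith
  rw [hα, hκ] at h
  calc _ ≤ _ := h
    _ ≤ (2 * N ^ 2) ^ 2 * (N ^ 2)! + 2 * (4 * N ^ 2) * (2 * N ^ 3) * (N ^ 2 * N * (N ^ 2 - 2)!) +
        (2 * N ^ 3) ^ 2 * ((N ^ 2 * N) ^ 2 * (N ^ 2 - 4)!) := by gcongr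
    _ = 4 * N ^ 4 * (N ^ 2)! + 16 * N ^ 4 * ((N ^ 2) ^ 2 * (N ^ 2 - 2)!) +
        4 * N ^ 4 * ((N ^ 2) ^ 4 * (N ^ 2 - 4)!) := by ring
    _ ≤ 4 * N ^ 4 * (N ^ 2)! + 16 * N ^ 4 * (2 ^ 2 * (N ^ 2)!) +
        4 * N ^ 4 * (2 ^ 4 * (N ^ 2)!) := by gcongr
    _ = 132 * N ^ 4 * (N ^ 2)! := by ring

theorem sum_Ycnt_sq_le (hN : 3 ≤ N) :
    ∑ σ : Perm (Fin N × Fin N), Ycnt N σ σ ^ 2 ≤ 528 * N ^ 4 * (N ^ 2)! := by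
  have hfst := sum_collisionCount_trianglePairs_sq_le hN (g := Prod.fst) fun r => by
    simp [card_filter, -sum_boole, Fintype.sum_prod_type, sum_comm (γ := Fin N)]
  have hsnd := sum_collisionCount_trianglePairs_sq_le hN (g := Prod.snd) fun r => by
    simp [card_filter, -sum_boole, Fintype.sum_prod_type]
  calc ∑ σ : Perm (Fin N × Fin N), Ycnt N σ σ ^ 2
      ≤ ∑ σ, 2 * (collisionCount Prod.fst (trianglePairs N) σ ^ 2 +
          collisionCount Prod.snd (trianglePairs N) σ ^ 2) := by
        gcongr with σ
        exact (Nat.pow_le_pow_left (Ycnt_le_collisionCount σ) 2).trans add_sq_le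
    _ ≤ 528 * N ^ 4 * (N ^ 2)! := by
        rw [← mul_sum, sum_add_distrib]
        have h528 : 528 * N ^ 4 * (N ^ 2)! = 4 * (132 * N ^ 4 * (N ^ 2)!) := by ring
        omega

end Triangles

theorem ae_tendsto_zero_of_tsum_measure_ne_top {Ω : Type*} [MeasurableSpace Ω] {μ : Measure Ω}
    {X : ℕ → Ω → ℝ} (h : ∀ ε > 0, ∑' n, μ {ω | ε ≤ |X n ω|} ≠ ∞) :
    ∀ᵐ ω ∂μ, Tendsto (fun n => X n ω) atTop (𝓝 0) := by
  have hsmall : ∀ᵐ ω ∂μ, ∀ m : ℕ, ∀ᶠ n in atTop, |X n ω| < 1 / (m + 1) := by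
    rw [ae_all_iff]
    intro m
    filter_upwards [ae_eventually_notMem (h _ Nat.one_div_pos_of_nat)] with ω hω
    simpa using hω
  filter_upwards [hsmall] with ω hω
  rw [NormedAddGroup.tendsto_nhds_zero]
  intro ε hε
  obtain ⟨m, hm⟩ := exists_nat_one_div_lt hε
  filter_upwards [hω m] with n hn
  rw [Real.norm_eq_abs]
  linarith

theorem measure_preimage_eq_card_div_card {Ω α : Type*} [MeasurableSpace Ω] [MeasurableSpace α]
    [Fintype α] [Nonempty α] {μ : Measure Ω} {X : Ω → α} (hX : Measurable X)
    (hlaw : μ.map X = (PMF.uniformOfFintype α).toMeasure) (s : Finset α)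
    (hs : MeasurableSet (s : Set α)) :
    μ (X ⁻¹' s) = #s / Fintype.card α := by
  rw [← Measure.map_apply hX hs, hlaw, PMF.toMeasure_uniformOfFintype_apply _ hs]
  simp

theorem card_filter_Ycnt_ge_div_factorial_le {N : ℕ} (hN : 3 ≤ N) {ε : ℝ} (hε : 0 < ε) :
    (#{σ : Perm (Fin N × Fin N) | ε ≤ |(Ycnt N σ σ : ℝ) / N ^ 3|} : ℝ) / (N ^ 2)! ≤
      528 / ε ^ 2 * (1 / (N : ℝ) ^ 2) := by
  have hmoment : (∑ σ : Perm (Fin N × Fin N), (Ycnt N σ σ : ℝ) ^ 2) ≤ 528 * N ^ 4 * (N ^ 2)! := by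
    exact_mod_cast sum_Ycnt_sq_le hN
  rw [div_le_iff₀ (by positivity)]
  calc _ ≤ (∑ σ : Perm (Fin N × Fin N), ((Ycnt N σ σ : ℝ) / N ^ 3) ^ 2) / ε ^ 2 :=
        card_filter_le_sum_sq_div _ _ hε
    _ = (∑ σ : Perm (Fin N × Fin N), (Ycnt N σ σ : ℝ) ^ 2) / (N ^ 6 * ε ^ 2) := by
        simp_rw [div_pow, ← sum_div]
        ring
    _ ≤ 528 * N ^ 4 * (N ^ 2)! / (N ^ 6 * ε ^ 2) := by gcongr
    _ = _ := by field_simp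

theorem tsum_measure_Ycnt_ge_ne_top (P : Measure ((N : ℕ) → Perm (Fin N × Fin N)))
    (hlaw : ∀ N : ℕ,
      P.map (fun ω => ω N) = (PMF.uniformOfFintype (Perm (Fin N × Fin N))).toMeasure)
    {ε : ℝ} (hε : 0 < ε) :
    ∑' N, P {ω | ε ≤ |(Ycnt N (ω N) (ω N) : ℝ) / N ^ 3|} ≠ ∞ := by
  set q : ℕ → ℝ := fun N =>
    (#{σ : Perm (Fin N × Fin N) | ε ≤ |(Ycnt N σ σ : ℝ) / N ^ 3|} : ℝ) / (N ^ 2)!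
  have hq : ∀ N, P {ω | ε ≤ |(Ycnt N (ω N) (ω N) : ℝ) / N ^ 3|} = ENNReal.ofReal (q N) := by
    intro N
    have h := measure_preimage_eq_card_div_card (measurable_pi_apply N) (hlaw N)
      {σ | ε ≤ |(Ycnt N σ σ : ℝ) / N ^ 3|} MeasurableSpace.measurableSet_top
    rw [Fintype.card_perm, Fintype.card_prod, Fintype.card_fin, ← sq] at h
    rw [ENNReal.ofReal_div_of_pos (by positivity), ENNReal.ofReal_natCast, ENNReal.ofReal_natCast,
      ← h]
    congr 1
    ext ω
    simp
  have hsummable : Summable q := by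
    refine ((Real.summable_one_div_nat_pow.2 one_lt_two).mul_left
      (528 / ε ^ 2)).of_norm_bounded_eventually_nat ?_
    filter_upwards [eventually_ge_atTop 3] with N hN
    rw [Real.norm_of_nonneg (by positivity)]
    exact card_filter_Ycnt_ge_div_factorial_le hN hε
  simp_rw [hq]
  rw [← ENNReal.ofReal_tsum_of_nonneg (fun _ => by positivity) hsummable]
  exact ENNReal.ofReal_ne_top

theorem stmt18_general (P : Measure ((N : ℕ) → Equiv.Perm (Fin N × Fin N)))
    (hlaw : ∀ N : ℕ, P.map (fun ω => ω N) =
      (PMF.uniformOfFintype (Equiv.Perm (Fin N × Fin N))).toMeasure) :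
    ∀ᵐ ω ∂P, Tendsto (fun N : ℕ => (Ycnt N (ω N) (ω N) : ℝ) / (N : ℝ) ^ 3)
      atTop (nhds 0) :=
  ae_tendsto_zero_of_tsum_measure_ne_top fun _ hε => tsum_measure_Ycnt_ge_ne_top P hlaw hε

/-- `P` is the product, over `N`, of the uniform probability measures on the symmetric groups
`S([N]²)`: it is a probability measure on `∏_N S([N]²)` whose coordinates are independent and
uniformly distributed.  Then almost surely `Y_N(𝔖_N, 𝔖_N)/N³ → 0`, i.e. almost every
realization satisfies condition (C). -/
theorem stmt18 (P : Measure ((N : ℕ) → Equiv.Perm (Fin N × Fin N)))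
    (hP : IsProbabilityMeasure P)
    (hindep : ProbabilityTheory.iIndepFun
      (fun N (ω : (k : ℕ) → Equiv.Perm (Fin k × Fin k)) => ω N) P)
    (hlaw : ∀ N : ℕ, P.map (fun ω => ω N) =
      (PMF.uniformOfFintype (Equiv.Perm (Fin N × Fin N))).toMeasure) :
    ∀ᵐ ω ∂P, Tendsto (fun N : ℕ => (Ycnt N (ω N) (ω N) : ℝ) / (N : ℝ) ^ 3)
      atTop (nhds 0) :=
  stmt18_general P hlaw
end
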